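/- For the Lie algebra g_ω and the general 15-parameter antisymmetric element r with cocommutator δ(X) := (ad_X⊗id + id⊗ad_X)(r), the Poisson-subgroup condition δ(J), δ(K₁), δ(K₂) ∈ h⊗h (where h = span{J,K₁,K₂}) holds if and only if a₁ = a₃ = a₄ = a₅ = b₁ = b₃ = b₄ = b₅ = c₃ = 0 and b₆ = c₁ = −a₆. This characterisation holds for every value of the parameter ω. -/

import Mathlib

/-!
The cocommutator `δ X = (ad_X ⊗ id + id ⊗ ad_X) r` is the action `⁅X, r⁆` of `X` on the tensor
square of the adjoint module, so on a wedge it acts as a derivation. Computing `⁅J, r⁆`, `⁅K₁, r⁆`,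
`⁅K₂, r⁆` from the brackets of `J, K₁, K₂`, the coordinates of `⁅K₁, r⁆` and `⁅K₂, r⁆` along
`eᵢ ⊗ eⱼ` with `eᵢ ∈ {P₀, P₁, P₂}` must vanish, which is a linear system in the fifteen parameters
with exactly the stated solutions. Conversely, under those relations the three cocommutators
are combinations of `J ∧ K₁`, `J ∧ K₂` and `K₁ ∧ K₂`.
-/

open TensorProduct

/-- `x ∧ y = x ⊗ y − y ⊗ x`. -/
noncomputable def wedge {g : Type*} [AddCommGroup g] [Module ℝ g] (x y : g) :
    TensorProduct ℝ g g := x ⊗ₜ[ℝ] y - y ⊗ₜ[ℝ] x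

theorem map_ad_id_add_map_id_ad_apply {R L : Type*} [CommRing R] [LieRing L] [LieAlgebra R L]
    (X : L) (t : L ⊗[R] L) :
    (map (LieAlgebra.ad R L X : L →ₗ[R] L) LinearMap.id +
      map LinearMap.id (LieAlgebra.ad R L X : L →ₗ[R] L) : L ⊗[R] L →ₗ[R] L ⊗[R] L) t =
      ⁅X, t⁆ := by
  induction t using TensorProduct.induction_on with
  | zero => simp
  | tmul x y => simp
  | add u v hu hv => rw [map_add, hu, hv, lie_add]

theorem lie_wedge {L : Type*} [LieRing L] [LieAlgebra ℝ L] (X x y : L) :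
    ⁅X, wedge x y⁆ = wedge ⁅X, x⁆ y + wedge x ⁅X, y⁆ := by
  simp only [wedge, lie_sub, TensorProduct.LieModule.lie_tmul_right]
  abel

theorem wedge_mem_range_map_subtype {V : Type*} [AddCommGroup V] [Module ℝ V]
    {p : Submodule ℝ V} {x y : V} (hx : x ∈ p) (hy : y ∈ p) :
    wedge x y ∈ LinearMap.range (map p.subtype p.subtype) :=
  ⟨⟨x, hx⟩ ⊗ₜ ⟨y, hy⟩ - ⟨y, hy⟩ ⊗ₜ ⟨x, hx⟩, by simp [wedge]⟩

theorem Module.Basis.repr_apply_eq_zero_of_mem_span_image {R M ι : Type*}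
    [CommRing R] [AddCommGroup M] [Module R M] (b : Module.Basis ι R M) {s : Set ι} {x : M}
    (hx : x ∈ Submodule.span R (b '' s)) {i : ι} (hi : i ∉ s) : b.repr x i = 0 :=
  Finsupp.notMem_support_iff.mp fun h => hi (b.mem_span_image.mp hx h)

theorem Module.Basis.tensorProduct_repr_eq_zero_of_mem_range_map_subtype {R M ι : Type*}
    [CommRing R] [AddCommGroup M] [Module R M] (b : Module.Basis ι R M) {s : Set ι}
    {p : Submodule R M} (hp : p ≤ Submodule.span R (b '' s)) {t : M ⊗[R] M}
    (ht : t ∈ LinearMap.range (map p.subtype p.subtype)) {i j : ι} (hij : i ∉ s ∨ j ∉ s) :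
    (b.tensorProduct b).repr t (i, j) = 0 := by
  obtain ⟨t, rfl⟩ := ht
  induction t using TensorProduct.induction_on with
  | zero => simp
  | tmul x y =>
    rcases hij with hi | hj
    · simp [b.repr_apply_eq_zero_of_mem_span_image (hp x.2) hi]
    · simp [b.repr_apply_eq_zero_of_mem_span_image (hp y.2) hj]
  | add u v hu hv => simp [hu, hv]

section GOmega

variable {g : Type*} [LieRing g] [LieAlgebra ℝ g] {J P0 P1 P2 K1 K2 : g}
  {a1 a2 a3 a4 a5 a6 b1 b2 b3 b4 b5 b6 c1 c2 c3 : ℝ}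

local notation "r" => a1 • wedge J P1 + a2 • wedge J K1 + a3 • wedge P0 P1 + a4 • wedge P0 K1
  + a5 • wedge P1 K1 + a6 • wedge P1 K2 + b1 • wedge J P2 + b2 • wedge J K2
  + b3 • wedge P0 P2 + b4 • wedge P0 K2 + b5 • wedge P2 K2 + b6 • wedge P2 K1
  + c1 • wedge J P0 + c2 • wedge K1 K2 + c3 • wedge P1 P2

theorem lie_J_r (hJP1 : ⁅J, P1⁆ = P2) (hJP2 : ⁅J, P2⁆ = -P1) (hJK1 : ⁅J, K1⁆ = K2)
    (hJK2 : ⁅J, K2⁆ = -K1) (hJP0 : ⁅J, P0⁆ = 0) :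
    ⁅J, r⁆ = (-b1) • wedge J P1 + a1 • wedge J P2 + (-b2) • wedge J K1
      + a2 • wedge J K2 + (-b3) • wedge P0 P1 + a3 • wedge P0 P2
      + (-b4) • wedge P0 K1 + a4 • wedge P0 K2 + (-(a6 + b6)) • wedge P1 K1
      + (a5 - b5) • wedge P1 K2 + (a5 - b5) • wedge P2 K1 + (a6 + b6) • wedge P2 K2 := by
  simp only [lie_add, lie_smul, lie_wedge, hJP1, hJP2, hJK1, hJK2, hJP0, lie_self]
  simp only [wedge, tmul_neg, neg_tmul, tmul_zero, zero_tmul]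
  module

theorem lie_K1_r (hJK1 : ⁅J, K1⁆ = K2) (hP0K1 : ⁅P0, K1⁆ = -P1) (hP1K1 : ⁅P1, K1⁆ = -P0)
    (hP2K1 : ⁅P2, K1⁆ = 0) (hK1K2 : ⁅K1, K2⁆ = -J) :
    ⁅K1, r⁆ = (a1 + b4) • wedge J P0 + (a6 + c1) • wedge J P1 + b5 • wedge J P2
      + c2 • wedge J K1 + a5 • wedge P0 K1 + (a6 + c1) • wedge P0 K2
      + c3 • wedge P0 P2 + a4 • wedge P1 K1 + (a1 + b4) • wedge P1 K2
      + b3 • wedge P1 P2 + b1 • wedge P2 K2 + a2 • wedge K1 K2 := by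
  simp only [lie_add, lie_smul, lie_wedge, ← lie_skew K1 J, ← lie_skew K1 P0, ← lie_skew K1 P1,
    ← lie_skew K1 P2, hJK1, hP0K1, hP1K1, hP2K1, hK1K2,
    lie_self, neg_neg, neg_zero]
  simp only [wedge, tmul_neg, neg_tmul, tmul_zero, zero_tmul]
  module

theorem lie_K2_r (hJK2 : ⁅J, K2⁆ = -K1) (hP0K2 : ⁅P0, K2⁆ = -P2) (hP1K2 : ⁅P1, K2⁆ = 0)
    (hP2K2 : ⁅P2, K2⁆ = -P0) (hK1K2 : ⁅K1, K2⁆ = -J) :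
    ⁅K2, r⁆ = (b1 - a4) • wedge J P0 + (-a5) • wedge J P1 + (c1 - b6) • wedge J P2
      + c2 • wedge J K2 + (b6 - c1) • wedge P0 K1 + b5 • wedge P0 K2
      + (-c3) • wedge P0 P1 + (-a1) • wedge P1 K1 + (-a3) • wedge P1 P2
      + (a4 - b1) • wedge P2 K1 + b4 • wedge P2 K2 + b2 • wedge K1 K2 := by
  simp only [lie_add, lie_smul, lie_wedge, ← lie_skew K2 J, ← lie_skew K2 P0, ← lie_skew K2 P1,
    ← lie_skew K2 P2, ← lie_skew K2 K1, hJK2, hP0K2, hP1K2, hP2K2, hK1K2,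
    lie_self, neg_neg, neg_zero]
  simp only [wedge, tmul_zero, zero_tmul]
  module

end GOmega

theorem poisson_subgroup_condition_g_omega
    (g : Type*) [LieRing g] [LieAlgebra ℝ g]
    (J P0 P1 P2 K1 K2 : g)
    (hind : LinearIndependent ℝ ![J, P0, P1, P2, K1, K2])
    (hspan : Submodule.span ℝ (Set.range ![J, P0, P1, P2, K1, K2]) = ⊤)
    (hJP1 : ⁅J, P1⁆ = P2) (hJP2 : ⁅J, P2⁆ = -P1)
    (hJK1 : ⁅J, K1⁆ = K2) (hJK2 : ⁅J, K2⁆ = -K1) (hJP0 : ⁅J, P0⁆ = 0)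
    (hP1K1 : ⁅P1, K1⁆ = -P0) (hP2K2 : ⁅P2, K2⁆ = -P0)
    (hP1K2 : ⁅P1, K2⁆ = 0) (hP2K1 : ⁅P2, K1⁆ = 0)
    (hP0K1 : ⁅P0, K1⁆ = -P1) (hP0K2 : ⁅P0, K2⁆ = -P2)
    (hK1K2 : ⁅K1, K2⁆ = -J)
    (a1 a2 a3 a4 a5 a6 b1 b2 b3 b4 b5 b6 c1 c2 c3 : ℝ)
    (r : TensorProduct ℝ g g)
    (hr : r = a1 • wedge J P1 + a2 • wedge J K1 + a3 • wedge P0 P1 + a4 • wedge P0 K1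
      + a5 • wedge P1 K1 + a6 • wedge P1 K2 + b1 • wedge J P2 + b2 • wedge J K2
      + b3 • wedge P0 P2 + b4 • wedge P0 K2 + b5 • wedge P2 K2 + b6 • wedge P2 K1
      + c1 • wedge J P0 + c2 • wedge K1 K2 + c3 • wedge P1 P2)
    (δ : g → TensorProduct ℝ g g)
    (hδ : ∀ X : g, δ X =
      (TensorProduct.map (LieAlgebra.ad ℝ g X : g →ₗ[ℝ] g) (LinearMap.id : g →ₗ[ℝ] g)
        + TensorProduct.map (LinearMap.id : g →ₗ[ℝ] g)
            (LieAlgebra.ad ℝ g X : g →ₗ[ℝ] g)) r) :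
    let h : Submodule ℝ g := Submodule.span ℝ {J, K1, K2}
    let hh : Submodule ℝ (TensorProduct ℝ g g) :=
      LinearMap.range (TensorProduct.map h.subtype h.subtype)
    ((δ J ∈ hh ∧ δ K1 ∈ hh ∧ δ K2 ∈ hh) ↔
      (a1 = 0 ∧ a3 = 0 ∧ a4 = 0 ∧ a5 = 0 ∧ b1 = 0 ∧ b3 = 0 ∧ b4 = 0 ∧ b5 = 0 ∧
        c3 = 0 ∧ b6 = -a6 ∧ c1 = -a6)) := by
  intro h hh
  have hδr (X : g) : δ X = ⁅X, r⁆ := (hδ X).trans (map_ad_id_add_map_id_ad_apply X r)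
  subst hr
  rw [hδr, hδr, hδr, lie_J_r hJP1 hJP2 hJK1 hJK2 hJP0, lie_K1_r hJK1 hP0K1 hP1K1 hP2K1 hK1K2,
    lie_K2_r hJK2 hP0K2 hP1K2 hP2K2 hK1K2]
  constructor
  · rintro ⟨-, hK1, hK2⟩
    obtain ⟨B, hB⟩ : ∃ B : Module.Basis (Fin 6) ℝ g, ⇑B = ![J, P0, P1, P2, K1, K2] :=
      ⟨_, Module.Basis.coe_mk hind hspan.ge⟩
    obtain ⟨rfl, rfl, rfl, rfl, rfl, rfl⟩ :
        J = B 0 ∧ P0 = B 1 ∧ P1 = B 2 ∧ P2 = B 3 ∧ K1 = B 4 ∧ K2 = B 5 := by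
      simp [hB]
    have h_le_span : h ≤ Submodule.span ℝ (B '' {0, 4, 5}) := by simp [h, Set.image_insert_eq]
    have coeff (t : g ⊗[ℝ] g) (ht : t ∈ hh) (i j : Fin 6) (hi : i ∉ ({0, 4, 5} : Set (Fin 6))) :
        (B.tensorProduct B).repr t (i, j) = 0 :=
      B.tensorProduct_repr_eq_zero_of_mem_range_map_subtype h_le_span ht (Or.inl hi)
    have hK1_coeff := coeff _ hK1
    have hK2_coeff := coeff _ hK2
    simp [wedge, Fin.forall_fin_succ, Finsupp.single_apply] at hK1_coeff hK2_coeff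
    casesm* _ ∧ _
    and_intros <;> linarith
  · rintro ⟨rfl, rfl, rfl, rfl, rfl, rfl, rfl, rfl, rfl, rfl, rfl⟩
    simp only [neg_zero, zero_smul, add_zero, add_neg_cancel, sub_self]
    refine ⟨add_mem ?_ ?_, add_mem ?_ ?_, add_mem ?_ ?_⟩ <;>
      exact Submodule.smul_mem _ _ <| wedge_mem_range_map_subtype
        (Submodule.subset_span (by simp)) (Submodule.subset_span (by simp))
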